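/- Let k be a field of characteristic zero, X a type, and A = FreeAlgebra k X. Let Δ : A → A⊗A be the unique k-algebra homomorphism with Δ(ι(x)) = ι(x)⊗1 + 1⊗ι(x) for all x ∈ X, ε : A → k the algebra homomorphism with ε(ι(x)) = 0, and δ_n the associated Drinfeld maps. Let L ⊆ A be the Lie subalgebra of A (under the commutator bracket [a,b] = ab − ba) generated by the generators ι(x), and for d ≥ 0 let F_d ⊆ A be the k-linear span of 1 together with all products u_1·u_2⋯u_j with 1 ≤ j ≤ d and u_1,…,u_j ∈ L (the d-th piece of the standard filtration of the enveloping algebra). If η ∈ A satisfies δ_{d+1}(η) = 0, then η ∈ F_d. -/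

import Mathlib

set_option linter.unusedSectionVars false
set_option maxHeartbeats 1000000


open scoped TensorProduct
noncomputable section

universe u
variable (k : Type u) [Field k] [CharZero k] (X : Type u)

/-- `A = FreeAlgebra k X`. -/
abbrev AX := FreeAlgebra k X

/-- The coproduct `Δ : A → A ⊗ A`, the unique `k`-algebra homomorphism making every
generator `ι(x)` primitive: `Δ(ι x) = ι x ⊗ 1 + 1 ⊗ ι x`. -/
def Dfx : AX k X →ₐ[k] (AX k X ⊗[k] AX k X) :=
  FreeAlgebra.lift k fun x : X =>
    FreeAlgebra.ι k x ⊗ₜ[k] (1 : AX k X) + (1 : AX k X) ⊗ₜ[k] FreeAlgebra.ι k x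

/-- The counit `ε : A → k`, the `k`-algebra homomorphism with `ε(ι x) = 0`. -/
def Efx : AX k X →ₐ[k] k := FreeAlgebra.lift k fun _ : X => 0

/-- The `n`-fold tensor power `A^{⊗n}` over `k` (with `A^{⊗0} = k`). -/
def TpowX : ℕ → ModuleCat k
  | 0 => ModuleCat.of k k
  | n+1 => ModuleCat.of k (AX k X ⊗[k] (TpowX n))

/-- The iterated coproducts `Δ^n : A → A^{⊗n}`, with `Δ^0 := ε`. -/
def DeltaX : (n : ℕ) → (AX k X →ₗ[k] TpowX k X n)
  | 0 => (Efx k X).toLinearMap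
  | n+1 => (TensorProduct.map LinearMap.id (DeltaX n)) ∘ₗ (Dfx k X).toLinearMap

/-- `id - u ∘ ε : A → A`. -/
def projX : AX k X →ₗ[k] AX k X :=
  LinearMap.id - (Algebra.linearMap k (AX k X)) ∘ₗ (Efx k X).toLinearMap

/-- `(id - u∘ε)^{⊗n}`. -/
def projPowX : (n : ℕ) → (TpowX k X n →ₗ[k] TpowX k X n)
  | 0 => LinearMap.id
  | n+1 => TensorProduct.map (projX k X) (projPowX n)

/-- Drinfeld's maps `δ_n := (id - u∘ε)^{⊗n} ∘ Δ^n : A → A^{⊗n}` (`δ_0 = ε`). -/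
def deltaX (n : ℕ) : AX k X →ₗ[k] TpowX k X n := projPowX k X n ∘ₗ DeltaX k X n

attribute [local instance 100] LieRing.ofAssociativeRing

/-- `L`: the Lie subalgebra of `A` (under the commutator bracket) generated by the
generators `ι(x)`, `x ∈ X`. -/
def LX : LieSubalgebra k (AX k X) :=
  LieSubalgebra.lieSpan k (AX k X) (Set.range (FreeAlgebra.ι k : X → AX k X))

/-- `F_d`: the `k`-linear span of `1` together with all products `u_1⋯u_j` with
`1 ≤ j ≤ d` and `u_1, …, u_j ∈ L` — the `d`-th piece of the standard filtration of
the enveloping algebra of `L`. -/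
def FdX (d : ℕ) : Submodule k (AX k X) :=
  Submodule.span k
    ({1} ∪ { z : AX k X | ∃ l : List (AX k X),
      1 ≤ l.length ∧ l.length ≤ d ∧ (∀ u ∈ l, u ∈ LX k X) ∧ z = l.prod })


section Aux

variable {k X} in
lemma Efx_ι (x : X) : Efx k X (FreeAlgebra.ι k x) = 0 := FreeAlgebra.lift_ι_apply _ _

variable {k X} in
lemma Dfx_ι (x : X) : Dfx k X (FreeAlgebra.ι k x) =
    FreeAlgebra.ι k x ⊗ₜ[k] 1 + 1 ⊗ₜ[k] FreeAlgebra.ι k x := FreeAlgebra.lift_ι_apply _ _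

variable {k X} in
lemma projX_apply (a : AX k X) :
    projX k X a = a - algebraMap k (AX k X) (Efx k X a) := rfl

lemma projX_one : projX k X 1 = 0 := by
  simp [projX_apply]

variable {k X} in
lemma projX_of_counit_eq_zero {a : AX k X} (h : Efx k X a = 0) : projX k X a = a := by
  simp [projX_apply, h]

/-- The primitive elements (with vanishing counit) form a Lie subalgebra. -/
def primLie : LieSubalgebra k (AX k X) where
  carrier := {a | Dfx k X a = a ⊗ₜ[k] 1 + 1 ⊗ₜ[k] a ∧ Efx k X a = 0}
  add_mem' := by
    rintro a b ⟨ha1, ha2⟩ ⟨hb1, hb2⟩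
    refine ⟨?_, by simp [ha2, hb2]⟩
    simp only [map_add, ha1, hb1, TensorProduct.add_tmul, TensorProduct.tmul_add]
    abel
  zero_mem' := by simp
  smul_mem' := by
    rintro c a ⟨ha1, ha2⟩
    refine ⟨?_, by simp [ha2]⟩
    rw [map_smul, ha1, smul_add, TensorProduct.smul_tmul', TensorProduct.tmul_smul]
  lie_mem' := by
    rintro a b ⟨ha1, ha2⟩ ⟨hb1, hb2⟩
    refine ⟨?_, by simp [Ring.lie_def, ha2, hb2]⟩
    simp only [Ring.lie_def, map_sub, map_mul, ha1, hb1]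
    simp only [add_mul, mul_add, Algebra.TensorProduct.tmul_mul_tmul, one_mul, mul_one,
      TensorProduct.sub_tmul, TensorProduct.tmul_sub]
    abel

variable {k X} in
lemma LX_le_primLie : LX k X ≤ primLie k X := by
  rw [LX, LieSubalgebra.lieSpan_le]
  rintro _ ⟨x, rfl⟩
  exact ⟨Dfx_ι x, Efx_ι x⟩

variable {k X} in
lemma Dfx_of_mem_LX {a : AX k X} (h : a ∈ LX k X) :
    Dfx k X a = a ⊗ₜ[k] 1 + 1 ⊗ₜ[k] a := (LX_le_primLie h).1

variable {k X} in
lemma Efx_of_mem_LX {a : AX k X} (h : a ∈ LX k X) : Efx k X a = 0 := (LX_le_primLie h).2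

variable {k X} in
lemma Efx_list_prod {l : List (AX k X)} (hne : l ≠ []) (hl : ∀ u ∈ l, u ∈ LX k X) :
    Efx k X l.prod = 0 := by
  cases l with
  | nil => exact absurd rfl hne
  | cons u t =>
      rw [List.prod_cons, map_mul, Efx_of_mem_LX (hl u (by simp)), zero_mul]

variable {k X} in
lemma projX_list_prod {l : List (AX k X)} (hne : l ≠ []) (hl : ∀ u ∈ l, u ∈ LX k X) :
    projX k X l.prod = l.prod :=
  projX_of_counit_eq_zero (Efx_list_prod hne hl)

-- Basic facts about the filtration `FdX`.

lemma one_mem_FdX (d : ℕ) : (1 : AX k X) ∈ FdX k X d :=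
  Submodule.subset_span (Or.inl rfl)

variable {k X} in
lemma prod_mem_FdX {d : ℕ} {l : List (AX k X)} (h1 : 1 ≤ l.length) (h2 : l.length ≤ d)
    (h3 : ∀ u ∈ l, u ∈ LX k X) : l.prod ∈ FdX k X d :=
  Submodule.subset_span (Or.inr ⟨l, h1, h2, h3, rfl⟩)

variable {k X} in
lemma FdX_mono {d d' : ℕ} (h : d ≤ d') : FdX k X d ≤ FdX k X d' := by
  apply Submodule.span_mono
  rintro z (hz | ⟨l, h1, h2, h3, rfl⟩)
  · exact Or.inl hz
  · exact Or.inr ⟨l, h1, h2.trans h, h3, rfl⟩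

lemma FdX_mul_le (a b : ℕ) : FdX k X a * FdX k X b ≤ FdX k X (a + b) := by
  rw [FdX, FdX, Submodule.span_mul_span, Submodule.span_le]
  rintro _ ⟨x, hx, y, hy, rfl⟩
  show x * y ∈ FdX k X (a + b)
  have hx' : x = 1 ∨ ∃ l : List (AX k X),
      1 ≤ l.length ∧ l.length ≤ a ∧ (∀ u ∈ l, u ∈ LX k X) ∧ x = l.prod := hx
  have hy' : y = 1 ∨ ∃ l : List (AX k X),
      1 ≤ l.length ∧ l.length ≤ b ∧ (∀ u ∈ l, u ∈ LX k X) ∧ y = l.prod := hy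
  rcases hx' with rfl | ⟨l, hl1, hl2, hl3, rfl⟩
  · rcases hy' with rfl | ⟨m, hm1, hm2, hm3, rfl⟩
    · simpa using one_mem_FdX k X (a+b)
    · simpa using prod_mem_FdX hm1 (hm2.trans (Nat.le_add_left _ _)) hm3
  · rcases hy' with rfl | ⟨m, hm1, hm2, hm3, rfl⟩
    · simpa using prod_mem_FdX hl1 (hl2.trans (Nat.le_add_right _ _)) hl3
    · rw [← List.prod_append]
      exact prod_mem_FdX (by simp; omega)
        (by simp; omega)
        (by intro u hu; rcases List.mem_append.mp hu with h | h
            exacts [hl3 u h, hm3 u h])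

variable {k X} in
lemma mem_LX_mem_FdX {u : AX k X} (hu : u ∈ LX k X) : u ∈ FdX k X 1 := by
  simpa using prod_mem_FdX (l := [u]) (by simp) (by simp) (by simpa using hu)

end Aux


section Combinatorics

variable {α : Type*} {M : Type*} [AddCommMonoid M]

/-- All ways to split a list into a left and right sublist (preserving order). -/
def splitsL : List α → List (List α × List α)
  | [] => [([], [])]
  | u :: t => ((splitsL t).map fun q => (u :: q.1, q.2)) ++
      ((splitsL t).map fun q => (q.1, u :: q.2))

/-- All ways to pick one element of a list, returning it with the remaining list. -/
def picksL : List α → List (α × List α)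
  | [] => []
  | u :: t => (u, t) :: ((picksL t).map fun q => (q.1, u :: q.2))

lemma splitsL_mem : ∀ {l : List α} {q : List α × List α}, q ∈ splitsL l →
    q.1.length + q.2.length = l.length ∧ (∀ u ∈ q.1, u ∈ l) ∧ (∀ u ∈ q.2, u ∈ l)
  | [], q, hq => by
      simp only [splitsL, List.mem_singleton] at hq
      subst hq; simp
  | u :: t, q, hq => by
      simp only [splitsL, List.mem_append, List.mem_map] at hq
      rcases hq with ⟨r, hr, rfl⟩ | ⟨r, hr, rfl⟩ <;>
        obtain ⟨h1, h2, h3⟩ := splitsL_mem hr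
      · refine ⟨by simp [← h1]; omega, ?_, ?_⟩
        · intro v hv; rcases List.mem_cons.mp hv with rfl | hv
          · exact List.mem_cons_self
          · exact List.mem_cons_of_mem _ (h2 v hv)
        · intro v hv; exact List.mem_cons_of_mem _ (h3 v hv)
      · refine ⟨by simp [← h1]; omega, ?_, ?_⟩
        · intro v hv; exact List.mem_cons_of_mem _ (h2 v hv)
        · intro v hv; rcases List.mem_cons.mp hv with rfl | hv
          · exact List.mem_cons_self
          · exact List.mem_cons_of_mem _ (h3 v hv)

lemma picksL_mem : ∀ {l : List α} {q : α × List α}, q ∈ picksL l →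
    q.1 ∈ l ∧ (∀ u ∈ q.2, u ∈ l) ∧ q.2.length + 1 = l.length
  | [], q, hq => by simp [picksL] at hq
  | u :: t, q, hq => by
      simp only [picksL, List.mem_cons, List.mem_map] at hq
      rcases hq with rfl | ⟨r, hr, rfl⟩
      · exact ⟨List.mem_cons_self, fun v hv => List.mem_cons_of_mem _ hv, by simp⟩
      · obtain ⟨h1, h2, h3⟩ := picksL_mem hr
        refine ⟨List.mem_cons_of_mem _ h1, ?_, by simp [← h3]⟩
        intro v hv; rcases List.mem_cons.mp hv with rfl | hv
        · exact List.mem_cons_self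
        · exact List.mem_cons_of_mem _ (h2 v hv)

lemma picksL_length : ∀ l : List α, (picksL l).length = l.length
  | [] => rfl
  | u :: t => by simp [picksL, picksL_length t]

lemma mem_splitsL_left {u : α} {t : List α} {r : List α × List α} (hr : r ∈ splitsL t) :
    (u :: r.1, r.2) ∈ splitsL (u :: t) := by
  simp only [splitsL, List.mem_append, List.mem_map]
  exact Or.inl ⟨r, hr, rfl⟩

lemma mem_splitsL_right {u : α} {t : List α} {r : List α × List α} (hr : r ∈ splitsL t) :
    (r.1, u :: r.2) ∈ splitsL (u :: t) := by
  simp only [splitsL, List.mem_append, List.mem_map]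
  exact Or.inr ⟨r, hr, rfl⟩

lemma sum_splitsL_eq_single (G : List α → List α → M) :
    ∀ l : List α, (∀ q ∈ splitsL l, q.1 ≠ [] → G q.1 q.2 = 0) →
      ((splitsL l).map fun q => G q.1 q.2).sum = G [] l
  | [], _ => by simp [splitsL]
  | u :: t, h => by
      simp only [splitsL, List.map_append, List.sum_append, List.map_map,
        Function.comp_def]
      have h1 : ((splitsL t).map fun q : List α × List α => G (u :: q.1) q.2).sum = 0 := by
        apply List.sum_eq_zero
        intro z hz
        simp only [List.mem_map] at hz
        obtain ⟨r, hr, rfl⟩ := hz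
        exact h _ (mem_splitsL_left hr) (by simp)
      have h2 : ((splitsL t).map fun q : List α × List α => G q.1 (u :: q.2)).sum
          = G [] (u :: t) :=
        sum_splitsL_eq_single (fun a b => G a (u :: b)) t
          (fun q hq hne => h _ (mem_splitsL_right hq) hne)
      rw [h1, h2, zero_add]

lemma sum_splitsL_eq_picks (G : List α → List α → M) :
    ∀ l : List α, (∀ q ∈ splitsL l, 2 ≤ q.1.length → G q.1 q.2 = 0) → G [] l = 0 →
      ((splitsL l).map fun q => G q.1 q.2).sum = ((picksL l).map fun q => G [q.1] q.2).sum
  | [], _, h0 => by simpa [splitsL, picksL] using h0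
  | u :: t, h, h0 => by
      simp only [splitsL, picksL, List.map_append, List.sum_append, List.map_map,
        Function.comp_def, List.map_cons, List.sum_cons]
      have h1 : ((splitsL t).map fun q : List α × List α => G (u :: q.1) q.2).sum
          = G [u] t := by
        apply sum_splitsL_eq_single (fun a b => G (u :: a) b) t
        intro q hq hne
        apply h _ (mem_splitsL_left hq)
        cases q1 : q.1 with
        | nil => exact absurd q1 hne
        | cons a s => simp [q1]
      have h2 : ((splitsL t).map fun q : List α × List α => G q.1 (u :: q.2)).sum
          = ((picksL t).map fun q : α × List α => G [q.1] (u :: q.2)).sum := by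
        apply sum_splitsL_eq_picks (fun a b => G a (u :: b)) t
        · intro q hq hlen
          exact h _ (mem_splitsL_right hq) hlen
        · exact h0
      rw [h1, h2]

lemma list_sum_map_add (l : List α) (f g : α → M) :
    (l.map fun a => f a + g a).sum = (l.map f).sum + (l.map g).sum := by
  induction l with
  | nil => simp
  | cons u t ih => simp only [List.map_cons, List.sum_cons, ih]; abel

end Combinatorics


section Delta

variable {k X}

lemma Dfx_list_prod : ∀ (l : List (AX k X)), (∀ u ∈ l, u ∈ LX k X) →
    Dfx k X l.prod = ((splitsL l).map fun q => q.1.prod ⊗ₜ[k] q.2.prod).sum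
  | [], _ => by simp [splitsL, Algebra.TensorProduct.one_def]
  | u :: t, h => by
      rw [List.prod_cons, map_mul, Dfx_of_mem_LX (h u (List.mem_cons_self)),
        Dfx_list_prod t (fun v hv => h v (List.mem_cons_of_mem _ hv))]
      simp only [splitsL, List.map_append, List.sum_append, List.map_map, Function.comp_def]
      rw [add_mul, ← List.sum_map_mul_left, ← List.sum_map_mul_left]
      congr 1
      · congr 1; apply List.map_congr_left; intro q _
        simp [Algebra.TensorProduct.tmul_mul_tmul]
      · congr 1; apply List.map_congr_left; intro q _
        simp [Algebra.TensorProduct.tmul_mul_tmul]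

lemma deltaX_succ (n : ℕ) : deltaX k X (n + 1) =
    (TensorProduct.map (projX k X) (deltaX k X n)) ∘ₗ (Dfx k X).toLinearMap := by
  show (TensorProduct.map (projX k X) (projPowX k X n)) ∘ₗ
      ((TensorProduct.map LinearMap.id (DeltaX k X n)) ∘ₗ (Dfx k X).toLinearMap) = _
  rw [← LinearMap.comp_assoc, ← TensorProduct.map_comp]
  rfl

lemma deltaX_succ_apply (n : ℕ) (a : AX k X) : deltaX k X (n+1) a =
    TensorProduct.map (projX k X) (deltaX k X n) (Dfx k X a) := by
  rw [deltaX_succ]; rfl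

end Delta


section DeltaProd

variable {k X}

lemma deltaX_prod_eq_zero : ∀ (m : ℕ) (l : List (AX k X)), (∀ u ∈ l, u ∈ LX k X) →
    l.length < m → deltaX k X m l.prod = 0
  | 0, l, _, h => absurd h (Nat.not_lt_zero _)
  | m+1, l, hl, h => by
      rw [deltaX_succ_apply, Dfx_list_prod l hl, map_list_sum, List.map_map]
      apply List.sum_eq_zero
      intro z hz
      simp only [List.mem_map, Function.comp_def] at hz
      obtain ⟨q, hq, rfl⟩ := List.mem_map.mp hz
      obtain ⟨hq1, hq2, hq3⟩ := splitsL_mem hq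
      rw [TensorProduct.map_tmul]
      cases q1 : q.1 with
      | nil =>
          rw [List.prod_nil, projX_one, TensorProduct.zero_tmul]
          rfl
      | cons a s =>
          have : q.2.length < m := by rw [q1] at hq1; simp at hq1; omega
          rw [deltaX_prod_eq_zero m q.2 (fun v hv => hl v (hq3 v hv)) this,
            TensorProduct.tmul_zero]
          rfl

lemma deltaX_succ_prod (m : ℕ) (l : List (AX k X)) (hl : ∀ u ∈ l, u ∈ LX k X)
    (hlen : l.length = m + 1) :
    deltaX k X (m+1) l.prod
      = ((picksL l).map fun q => q.1 ⊗ₜ[k] (deltaX k X m q.2.prod)).sum := by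
  rw [deltaX_succ_apply, Dfx_list_prod l hl, map_list_sum, List.map_map]
  simp only [Function.comp_def, TensorProduct.map_tmul]
  rw [sum_splitsL_eq_picks (fun a b => projX k X a.prod ⊗ₜ[k] deltaX k X m b.prod) l]
  · congr 1
    apply List.map_congr_left
    intro q hq
    obtain ⟨h1, h2, h3⟩ := picksL_mem hq
    rw [List.prod_singleton, projX_of_counit_eq_zero (Efx_of_mem_LX (hl _ h1))]
  · intro q hq h2le
    obtain ⟨hq1, hq2, hq3⟩ := splitsL_mem hq
    have : q.2.length < m := by omega
    rw [deltaX_prod_eq_zero m q.2 (fun v hv => hl v (hq3 v hv)) this,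
      TensorProduct.tmul_zero]
  · rw [List.prod_nil, projX_one, TensorProduct.zero_tmul]

end DeltaProd

/-- The iterated multiplication maps `A^{⊗n} → A`. -/
def mulX : (n : ℕ) → (TpowX k X n →ₗ[k] AX k X)
  | 0 => Algebra.linearMap k (AX k X)
  | n+1 => (LinearMap.mul' k (AX k X)) ∘ₗ (TensorProduct.map LinearMap.id (mulX n))

/-- `ν_n := μ_n ∘ δ_n`. -/
def nuX (n : ℕ) : AX k X →ₗ[k] AX k X := mulX k X n ∘ₗ deltaX k X n

section Nu

variable {k X}

lemma mulX_tmul (n : ℕ) (x : AX k X) (τ : TpowX k X n) :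
    mulX k X (n+1) (x ⊗ₜ[k] τ) = x * mulX k X n τ := by
  show (LinearMap.mul' k (AX k X)) ((TensorProduct.map LinearMap.id (mulX k X n)) (x ⊗ₜ[k] τ))
    = _
  rw [TensorProduct.map_tmul, LinearMap.mul'_apply, LinearMap.id_apply]

lemma nuX_eq_zero {m : ℕ} {l : List (AX k X)} (hl : ∀ u ∈ l, u ∈ LX k X)
    (h : l.length < m) : nuX k X m l.prod = 0 := by
  show mulX k X m (deltaX k X m l.prod) = 0
  rw [deltaX_prod_eq_zero m l hl h, map_zero]

lemma nuX_succ_prod (m : ℕ) (l : List (AX k X)) (hl : ∀ u ∈ l, u ∈ LX k X)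
    (hlen : l.length = m + 1) :
    nuX k X (m+1) l.prod = ((picksL l).map fun q => q.1 * nuX k X m q.2.prod).sum := by
  show mulX k X (m+1) (deltaX k X (m+1) l.prod) = _
  rw [deltaX_succ_prod m l hl hlen]
  erw [map_list_sum]
  erw [List.map_map]
  congr 1

lemma nuX_zero_one : nuX k X 0 (1 : AX k X) = 1 := by
  show algebraMap k (AX k X) (Efx k X 1) = 1
  rw [map_one, map_one]

end Nu


section Key

variable {k X}

lemma picks_prod_sub_mem : ∀ (m : ℕ) (l : List (AX k X)), (∀ u ∈ l, u ∈ LX k X) →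
    l.length = m + 1 → ∀ q ∈ picksL l, q.1 * q.2.prod - l.prod ∈ FdX k X m
  | m, [], _, hlen => by simp at hlen
  | m, u :: t, hl, hlen => by
      intro q hq
      simp only [picksL, List.mem_cons, List.mem_map] at hq
      rcases hq with rfl | ⟨r, hr, rfl⟩
      · rw [List.prod_cons, sub_self]
        exact Submodule.zero_mem _
      · obtain ⟨hr1, hr2, hr3⟩ := picksL_mem hr
        have hu : u ∈ LX k X := hl u (List.mem_cons_self)
        have ht : ∀ v ∈ t, v ∈ LX k X := fun v hv => hl v (List.mem_cons_of_mem _ hv)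
        cases m with
        | zero =>
            exfalso
            have : t.length = 0 := by simpa using hlen
            rw [List.length_eq_zero_iff.mp this] at hr
            simp [picksL] at hr
        | succ m' =>
            have htlen : t.length = m' + 1 := by simpa using hlen
            have IH := picks_prod_sub_mem m' t ht htlen r hr
            show r.1 * (u :: r.2).prod - (u :: t).prod ∈ FdX k X (m' + 1)
            have key : r.1 * (u :: r.2).prod - (u :: t).prod
                = u * (r.1 * r.2.prod - t.prod) + (r.1 * u - u * r.1) * r.2.prod := by
              rw [List.prod_cons, List.prod_cons]
              noncomm_ring
            rw [key]
            apply Submodule.add_mem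
            · have h1 : u ∈ FdX k X 1 := mem_LX_mem_FdX hu
              have := FdX_mul_le k X 1 m' (Submodule.mul_mem_mul h1 IH)
              simpa [Nat.add_comm] using this
            · have hbr : r.1 * u - u * r.1 ∈ LX k X := by
                have := (LX k X).lie_mem (ht r.1 hr1) hu
                simpa [Ring.lie_def] using this
              have : ((r.1 * u - u * r.1) :: r.2).prod = (r.1 * u - u * r.1) * r.2.prod :=
                List.prod_cons
              rw [← this]
              apply prod_mem_FdX (by simp) (by simp; omega)
              intro v hv
              rcases List.mem_cons.mp hv with rfl | hv
              · exact hbr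
              · exact ht v (hr2 v hv)

lemma nuX_prod : ∀ (m : ℕ) (l : List (AX k X)), (∀ u ∈ l, u ∈ LX k X) →
    l.length = m + 1 →
    nuX k X (m+1) l.prod - (((m+1).factorial : k)) • l.prod ∈ FdX k X m
  | 0, l, hl, hlen => by
      cases l with
      | nil => simp at hlen
      | cons u t =>
          have : t = [] := by simpa using List.length_eq_zero_iff.mp (by simpa using hlen)
          subst this
          rw [nuX_succ_prod 0 [u] hl hlen]
          simp only [picksL, List.map_nil, List.map_cons, List.sum_cons, List.sum_nil,
            List.prod_nil, List.prod_cons, nuX_zero_one]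
          simp
  | m+1, l, hl, hlen => by
      rw [nuX_succ_prod (m+1) l hl hlen]
      set c : k := (((m+1+1).factorial : k)) with hc
      set c' : k := (((m+1).factorial : k)) with hc'
      have key : ∀ q ∈ picksL l, q.1 * nuX k X (m+1) q.2.prod
          = (q.1 * (nuX k X (m+1) q.2.prod - c' • q.2.prod) + c' • (q.1 * q.2.prod - l.prod))
            + c' • l.prod := by
        intro q _
        rw [mul_sub, smul_sub, mul_smul_comm]
        abel
      rw [List.map_congr_left key, list_sum_map_add, list_sum_map_add]
      have hconst : ((picksL l).map fun _ => c' • l.prod).sum = (m+1+1) • (c' • l.prod) := by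
        rw [List.map_const', List.sum_replicate, picksL_length, hlen]
      rw [hconst]
      have harith : (m+1+1) • (c' • l.prod) = c • l.prod := by
        rw [← Nat.cast_smul_eq_nsmul k (m+1+1), smul_smul]
        congr 1
        rw [hc, hc', Nat.factorial_succ (m+1), Nat.cast_mul]
      rw [harith, add_sub_cancel_right]
      apply Submodule.add_mem
      · apply list_sum_mem
        intro z hz
        simp only [List.mem_map] at hz
        obtain ⟨q, hq, rfl⟩ := hz
        obtain ⟨h1, h2, h3⟩ := picksL_mem hq
        have hq2len : q.2.length = m + 1 := by omega
        have IH := nuX_prod m q.2 (fun v hv => hl v (h2 v hv)) hq2len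
        have hq1 : q.1 ∈ FdX k X 1 := mem_LX_mem_FdX (hl q.1 h1)
        have := FdX_mul_le k X 1 m (Submodule.mul_mem_mul hq1 IH)
        simpa [Nat.add_comm] using this
      · apply list_sum_mem
        intro z hz
        simp only [List.mem_map] at hz
        obtain ⟨q, hq, rfl⟩ := hz
        exact Submodule.smul_mem _ _ (picks_prod_sub_mem (m+1) l hl hlen q hq)

end Key


section Descend

variable {k X}

lemma FdX_succ_le_comap (m : ℕ) :
    FdX k X (m+1) ≤ Submodule.comap
      ((nuX k X (m+1)) - (((m+1).factorial : k)) • LinearMap.id) (FdX k X m) := by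
  rw [FdX, Submodule.span_le]
  rintro z hz
  rcases hz with hz | ⟨l, h1, h2, h3, rfl⟩
  · have hz1 : z = 1 := hz
    subst hz1
    simp only [SetLike.mem_coe, Submodule.mem_comap, LinearMap.sub_apply,
      LinearMap.smul_apply, LinearMap.id_apply]
    have hnu : nuX k X (m+1) (1 : AX k X) = 0 := by
      simpa using nuX_eq_zero (m := m+1) (l := ([] : List (AX k X))) (by simp) (by simp)
    rw [hnu, zero_sub]
    exact Submodule.neg_mem _ (Submodule.smul_mem _ _ (one_mem_FdX k X m))
  · simp only [SetLike.mem_coe, Submodule.mem_comap, LinearMap.sub_apply,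
      LinearMap.smul_apply, LinearMap.id_apply]
    by_cases hlm : l.length = m + 1
    · exact nuX_prod m l h3 hlm
    · have hlt : l.length < m + 1 := by omega
      rw [nuX_eq_zero h3 hlt, zero_sub]
      exact Submodule.neg_mem _
        (Submodule.smul_mem _ _ (prod_mem_FdX h1 (by omega) h3))

lemma descend {m : ℕ} {η : AX k X} (hη : η ∈ FdX k X (m+1))
    (h0 : deltaX k X (m+1) η = 0) : η ∈ FdX k X m := by
  have h1 := FdX_succ_le_comap m hη
  simp only [Submodule.mem_comap, LinearMap.sub_apply, LinearMap.smul_apply,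
    LinearMap.id_apply] at h1
  have hnu : nuX k X (m+1) η = 0 := by
    show mulX k X (m+1) (deltaX k X (m+1) η) = 0
    rw [h0, map_zero]
  rw [hnu, zero_sub] at h1
  have hne : (((m+1).factorial : k)) ≠ 0 := Nat.cast_ne_zero.mpr (Nat.factorial_ne_zero _)
  have h3 : (((m+1).factorial : k)) • η ∈ FdX k X m := by
    simpa using Submodule.neg_mem _ h1
  have h4 := Submodule.smul_mem _ ((((m+1).factorial : k)))⁻¹ h3
  rwa [smul_smul, inv_mul_cancel₀ hne, one_smul] at h4

end Descend


section Mono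

variable {k X}

lemma assoc_natX {M N P M' N' P' : Type u} [AddCommGroup M] [AddCommGroup N]
    [AddCommGroup P] [AddCommGroup M'] [AddCommGroup N'] [AddCommGroup P']
    [Module k M] [Module k N] [Module k P] [Module k M'] [Module k N'] [Module k P']
    (f : M →ₗ[k] M') (g : N →ₗ[k] N') (h : P →ₗ[k] P') :
    (TensorProduct.assoc k M' N' P').toLinearMap ∘ₗ
      (TensorProduct.map (TensorProduct.map f g) h)
    = (TensorProduct.map f (TensorProduct.map g h)) ∘ₗ
      (TensorProduct.assoc k M N P).toLinearMap := by
  apply TensorProduct.ext_threefold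
  intro x y z
  simp

lemma algebraMap_toLinearMap_eq {B C : Type u} [Ring B] [Ring C] [Algebra k B] [Algebra k C]
    {B' C' : Type u} [Ring B'] [Ring C'] [Algebra k B'] [Algebra k C']
    (f : B →ₐ[k] B') (g : C →ₐ[k] C') :
    (Algebra.TensorProduct.map f g).toLinearMap
      = TensorProduct.map f.toLinearMap g.toLinearMap :=
  TensorProduct.ext' fun x y => by simp

lemma coassocX :
    (TensorProduct.assoc k (AX k X) (AX k X) (AX k X)).toLinearMap ∘ₗ
      (TensorProduct.map (Dfx k X).toLinearMap LinearMap.id) ∘ₗ (Dfx k X).toLinearMap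
    = (TensorProduct.map LinearMap.id (Dfx k X).toLinearMap) ∘ₗ (Dfx k X).toLinearMap := by
  have h : ((Algebra.TensorProduct.assoc k k k (AX k X) (AX k X) (AX k X) :
        (AX k X ⊗[k] AX k X) ⊗[k] AX k X ≃ₐ[k] _).toAlgHom.comp
      ((Algebra.TensorProduct.map (Dfx k X) (AlgHom.id k (AX k X))).comp (Dfx k X)))
      = (Algebra.TensorProduct.map (AlgHom.id k (AX k X)) (Dfx k X)).comp (Dfx k X) := by
    apply FreeAlgebra.hom_ext
    funext x
    simp [Dfx_ι, TensorProduct.add_tmul, TensorProduct.tmul_add, Algebra.TensorProduct.one_def]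
    abel
  have h' := congrArg AlgHom.toLinearMap h
  rw [AlgHom.comp_toLinearMap, AlgHom.comp_toLinearMap, AlgHom.comp_toLinearMap,
    algebraMap_toLinearMap_eq, algebraMap_toLinearMap_eq] at h'
  exact LinearMap.ext fun a => DFunLike.congr_fun h' a

/-- `(proj ⊗ proj) ∘ Δ`. -/
def D2X' : AX k X →ₗ[k] (AX k X ⊗[k] AX k X) :=
  (TensorProduct.map (projX k X) (projX k X)) ∘ₗ (Dfx k X).toLinearMap

lemma D2X'_comp_proj : D2X' ∘ₗ projX k X = (D2X' : AX k X →ₗ[k] _) := by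
  apply LinearMap.ext
  intro a
  show D2X' (a - algebraMap k (AX k X) (Efx k X a)) = D2X' a
  rw [map_sub]
  suffices hz : D2X' (algebraMap k (AX k X) (Efx k X a)) = 0 by rw [hz, sub_zero]
  show (TensorProduct.map (projX k X) (projX k X)) (Dfx k X (algebraMap k _ (Efx k X a))) = 0
  rw [AlgHom.commutes, Algebra.TensorProduct.algebraMap_apply, TensorProduct.map_tmul,
    projX_one, TensorProduct.tmul_zero]

lemma deltaX_succ_succ (n : ℕ) :
    deltaX k X (n+2) = (TensorProduct.assoc k (AX k X) (AX k X) (TpowX k X n)).toLinearMap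
      ∘ₗ (TensorProduct.map D2X' LinearMap.id) ∘ₗ deltaX k X (n+1) := by
  have e1 : deltaX k X (n+2)
      = TensorProduct.map (projX k X) (TensorProduct.map (projX k X) (deltaX k X n))
        ∘ₗ (TensorProduct.map LinearMap.id (Dfx k X).toLinearMap)
        ∘ₗ (Dfx k X).toLinearMap := by
    rw [deltaX_succ (n+1), deltaX_succ n]
    rw [← LinearMap.comp_assoc, ← TensorProduct.map_comp, LinearMap.comp_id]
    rfl
  rw [e1, ← coassocX]
  have e2 : TensorProduct.map (projX k X) (TensorProduct.map (projX k X) (deltaX k X n))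
      ∘ₗ (TensorProduct.assoc k (AX k X) (AX k X) (AX k X)).toLinearMap
      = (TensorProduct.assoc k (AX k X) (AX k X) (TpowX k X n)).toLinearMap
        ∘ₗ TensorProduct.map (TensorProduct.map (projX k X) (projX k X)) (deltaX k X n) := by
    rw [assoc_natX]
  have e3 : deltaX k X (n+1) = TensorProduct.map (projX k X) (deltaX k X n)
      ∘ₗ (Dfx k X).toLinearMap := deltaX_succ n
  rw [e3]
  calc TensorProduct.map (projX k X) (TensorProduct.map (projX k X) (deltaX k X n))
        ∘ₗ ((TensorProduct.assoc k (AX k X) (AX k X) (AX k X)).toLinearMap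
        ∘ₗ (TensorProduct.map (Dfx k X).toLinearMap LinearMap.id) ∘ₗ (Dfx k X).toLinearMap)
      = ((TensorProduct.assoc k (AX k X) (AX k X) (TpowX k X n)).toLinearMap
        ∘ₗ TensorProduct.map (TensorProduct.map (projX k X) (projX k X)) (deltaX k X n))
        ∘ₗ (TensorProduct.map (Dfx k X).toLinearMap LinearMap.id) ∘ₗ (Dfx k X).toLinearMap := by
        rw [← LinearMap.comp_assoc, e2]
        try rw [LinearMap.comp_assoc, LinearMap.comp_assoc, LinearMap.comp_assoc]
    _ = (TensorProduct.assoc k (AX k X) (AX k X) (TpowX k X n)).toLinearMap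
        ∘ₗ (TensorProduct.map D2X' (deltaX k X n)) ∘ₗ (Dfx k X).toLinearMap := by
        rw [LinearMap.comp_assoc]
        congr 1
        rw [← LinearMap.comp_assoc, ← TensorProduct.map_comp]
        rfl
    _ = (TensorProduct.assoc k (AX k X) (AX k X) (TpowX k X n)).toLinearMap
        ∘ₗ (TensorProduct.map D2X' LinearMap.id)
        ∘ₗ (TensorProduct.map (projX k X) (deltaX k X n) ∘ₗ (Dfx k X).toLinearMap) := by
        congr 1
        rw [← LinearMap.comp_assoc, ← TensorProduct.map_comp, LinearMap.id_comp,
          D2X'_comp_proj]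

lemma deltaX_succ_succ_apply (n : ℕ) (a : AX k X) :
    deltaX k X (n+2) a
      = (TensorProduct.assoc k (AX k X) (AX k X) (TpowX k X n)).toLinearMap
        (TensorProduct.map D2X' LinearMap.id (deltaX k X (n+1) a)) := by
  rw [deltaX_succ_succ]; rfl

lemma deltaX_zero_succ {n : ℕ} {η : AX k X} (hn : 1 ≤ n) (h : deltaX k X n η = 0) :
    deltaX k X (n+1) η = 0 := by
  obtain ⟨m, rfl⟩ := Nat.exists_eq_add_of_le hn
  rw [Nat.add_comm 1 m] at h ⊢
  rw [deltaX_succ_succ_apply, h]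
  erw [map_zero]
  rfl

lemma deltaX_zero_of_le {d : ℕ} {η : AX k X} (h : deltaX k X (d+1) η = 0) :
    ∀ m : ℕ, d + 1 ≤ m → deltaX k X m η = 0 := by
  intro m hm
  induction m, hm using Nat.le_induction with
  | base => exact h
  | succ n hn ih => exact deltaX_zero_succ (by omega) ih

end Mono


section Assemble

variable {k X}

lemma exists_mem_FdX (a : AX k X) : ∃ m : ℕ, a ∈ FdX k X m := by
  induction a using FreeAlgebra.induction with
  | grade0 r =>
      refine ⟨0, ?_⟩
      rw [Algebra.algebraMap_eq_smul_one]
      exact Submodule.smul_mem _ _ (one_mem_FdX k X 0)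
  | grade1 x =>
      refine ⟨1, ?_⟩
      have hx : FreeAlgebra.ι k x ∈ LX k X :=
        LieSubalgebra.subset_lieSpan ⟨x, rfl⟩
      exact mem_LX_mem_FdX hx
  | mul a b ha hb =>
      obtain ⟨m, hm⟩ := ha
      obtain ⟨n, hn⟩ := hb
      exact ⟨m + n, FdX_mul_le k X m n (Submodule.mul_mem_mul hm hn)⟩
  | add a b ha hb =>
      obtain ⟨m, hm⟩ := ha
      obtain ⟨n, hn⟩ := hb
      exact ⟨m + n, Submodule.add_mem _ (FdX_mono (Nat.le_add_right _ _) hm)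
        (FdX_mono (Nat.le_add_left _ _) hn)⟩

end Assemble

/-- In `A = FreeAlgebra k X` with the coproduct making the generators
primitive, if `η ∈ A` satisfies `δ_{d+1}(η) = 0`, then `η` lies in the `d`-th piece
`F_d` of the standard filtration of the enveloping algebra `A = U(L)` of the free Lie
algebra `L`. -/
theorem stmt17 (d : ℕ) (η : AX k X) (h : deltaX k X (d + 1) η = 0) : η ∈ FdX k X d := by
  obtain ⟨M, hM⟩ := exists_mem_FdX η
  have key : ∀ j : ℕ, η ∈ FdX k X (d + j) → η ∈ FdX k X d := by
    intro j
    induction j with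
    | zero => exact fun hj => hj
    | succ j ih =>
        intro hj
        apply ih
        have hz : deltaX k X (d + j + 1) η = 0 :=
          deltaX_zero_of_le h (d + j + 1) (by omega)
        exact descend (by simpa [Nat.add_assoc] using hj) hz
  exact key M (FdX_mono (Nat.le_add_left _ _) hM)
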